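/- Let F : (finite sequences of ℕ) → ℕ be a function such that for all strictly increasing x_1 < ... < x_n we have F(x_1,...,x_n) ≥ max{x_1,...,x_n} + 1. Define f(0) = F(⟨⟩) and f(n) = max{ F(t_1,...,t_j) : t_1 < ... < t_j ≤ n, j ≤ n } for n ≥ 1. Then f is monotone, and for every infinite set X = {x_1 < x_2 < ...} ⊆ ℕ and every N, if x_{n+1} ≤ F(x_1,...,x_n) for all n ≥ N, then x_{N+k} ≤ f^k(x_N) for all k ≥ 1. -/

import Mathlib

/-!
As `x` is strictly increasing and positive, `(x 0, …, x n)` is one of the sequences over which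
`fDef F (x n)` takes its maximum, so `x (n + 1) ≤ fDef F (x n)` for `n ≥ N`; since `fDef F` is
monotone, this one-step bound iterates.
-/

open Filter Set

/-- A strategy: maps finite sequences of the opponent's moves to a natural number. -/
abbrev Strat := List ℕ → ℕ

/-- TWO's move in inning `k` (0-indexed) when following strategy `σ` against ONE's
moves `m`: TWO has seen `m 0, …, m k`. -/
def twoFollow (σ : Strat) (m : ℕ → ℕ) (k : ℕ) : ℕ :=
  σ (List.ofFn fun i : Fin (k + 1) => m i)

/-- ONE's move in inning `k` when following strategy `σ` against TWO's moves `n`: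
ONE's move depends on `n 0, …, n (k-1)` (the first move is `σ []`). -/
def oneFollow (σ : Strat) (n : ℕ → ℕ) (k : ℕ) : ℕ :=
  σ (List.ofFn fun i : Fin k => n i)

/-- TWO wins the play `(m 0, n 0, m 1, n 1, …)` of the game `G1(F)`. -/
def TwoWins1 (F : Set (Set ℕ)) (m n : ℕ → ℕ) : Prop :=
  StrictMono n ∧ (∀ N : ℕ, ∃ k, N ≤ k ∧ m k < n k) ∧ Set.range n ∈ F

/-- TWO wins the play `(m 0, n 0, m 1, n 1, …)` of the game `G2(F)`. -/
def TwoWins2 (F : Set (Set ℕ)) (m n : ℕ → ℕ) : Prop :=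
  (∀ᶠ k in Filter.atTop, m k < n k) ∧ Set.range n ∈ F

/-- `σ` is a winning strategy for TWO in `G1(F)`. -/
def TwoWinning1 (F : Set (Set ℕ)) (σ : Strat) : Prop :=
  ∀ m : ℕ → ℕ, TwoWins1 F m (twoFollow σ m)

/-- `σ` is a winning strategy for ONE in `G1(F)`. -/
def OneWinning1 (F : Set (Set ℕ)) (σ : Strat) : Prop :=
  ∀ n : ℕ → ℕ, ¬ TwoWins1 F (oneFollow σ n) n

/-- `σ` is a winning strategy for TWO in `G2(F)`. -/
def TwoWinning2 (F : Set (Set ℕ)) (σ : Strat) : Prop :=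
  ∀ m : ℕ → ℕ, TwoWins2 F m (twoFollow σ m)

/-- `σ` is a winning strategy for ONE in `G2(F)`. -/
def OneWinning2 (F : Set (Set ℕ)) (σ : Strat) : Prop :=
  ∀ n : ℕ → ℕ, ¬ TwoWins2 F (oneFollow σ n) n

/-- `F` is a non-principal filter on `ℕ`: upward closed, closed under finite
intersections, and every member is infinite. -/
def IsNPFilter (F : Set (Set ℕ)) : Prop :=
  (∀ X ∈ F, ∀ Y : Set ℕ, X ⊆ Y → Y ∈ F) ∧
  (∀ X ∈ F, ∀ Y ∈ F, X ∩ Y ∈ F) ∧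
  (∀ X ∈ F, X.Infinite)

/-- `F` is a rare filter: every partition of `ℕ` into disjoint (nonempty) finite sets
admits a selector in `F`. -/
def IsRare (F : Set (Set ℕ)) : Prop :=
  ∀ I : ℕ → Set ℕ, (∀ n, (I n).Finite) → (∀ n, (I n).Nonempty) →
    (Pairwise fun i j => Disjoint (I i) (I j)) → (⋃ n, I n) = Set.univ →
    ∃ X ∈ F, ∀ n, (X ∩ I n).Subsingleton

/-- The subset of Cantor space `2^ℕ` corresponding to the filter `F`. -/
def cantorCoded (F : Set (Set ℕ)) : Set (ℕ → Bool) :=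
  {χ | {n | χ n = true} ∈ F}

/-- The increasing enumeration of `X ⊆ ℕ`. -/
noncomputable def enum (X : Set ℕ) : ℕ → ℕ := Nat.nth (· ∈ X)

/-- `g` eventually dominates `f`. -/
def EvDom (g f : ℕ → ℕ) : Prop := ∀ᶠ k in Filter.atTop, f k < g k

/-- `fDef F n` is the maximum of `F` over all strictly increasing finite sequences with
entries at most `n` (for `n ≥ 1`), and `fDef F 0 = F []`. Sublists of `[0, …, n]` are
exactly the strictly increasing sequences with entries `≤ n`. -/
def fDef (F : Strat) : ℕ → ℕ
  | 0 => F []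
  | (n + 1) => (((List.range (n + 2)).sublists).map F).foldr max 0

theorem List.Pairwise.sublist_range {l : List ℕ} (hl : l.Pairwise (· < ·)) {n : ℕ}
    (h : ∀ a ∈ l, a < n) : l.Sublist (List.range n) :=
  List.sublist_of_subperm_of_pairwise (hl.nodup.subperm fun a ha => List.mem_range.2 (h a ha))
    hl List.pairwise_lt_range

theorem Monotone.le_iterate_of_le_succ {α : Type*} [Preorder α] {f : α → α} (hf : Monotone f)
    {x : ℕ → α} {N : ℕ} (hx : ∀ n, N ≤ n → x (n + 1) ≤ f (x n)) (k : ℕ) :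
    x (N + k) ≤ f^[k] (x N) :=
  hf.seq_le_seq (x := fun k => x (N + k)) (y := fun k => f^[k] (x N)) k le_rfl
    (fun k _ => hx (N + k) (Nat.le_add_right N k))
    (fun k _ => (Function.iterate_succ_apply' f k (x N)).ge)

section fDef

variable {F : Strat}

theorem apply_le_fDef {l : List ℕ} (hl : l.Pairwise (· < ·)) {n : ℕ} (hn : 0 < n)
    (h : ∀ a ∈ l, a ≤ n) : F l ≤ fDef F n := by
  obtain ⟨m, rfl⟩ := Nat.exists_eq_succ_of_ne_zero hn.ne'
  have hsub : l.Sublist (List.range (m + 2)) :=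
    hl.sublist_range fun a ha => Nat.lt_succ_of_le (h a ha)
  exact List.le_max_of_le' 0 (List.mem_map_of_mem (List.mem_sublists.2 hsub)) le_rfl

theorem fDef_le_fDef_succ (n : ℕ) : fDef F n ≤ fDef F (n + 1) := by
  cases n with
  | zero => exact apply_le_fDef List.Pairwise.nil Nat.one_pos (by simp)
  | succ m =>
    refine List.max_le_of_forall_le _ _ fun a ha => ?_
    obtain ⟨l, hl, rfl⟩ := List.mem_map.1 ha
    have hsub := List.mem_sublists.1 hl
    exact apply_le_fDef (List.pairwise_lt_range.sublist hsub) (Nat.succ_pos _)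
      fun a ha => by have := List.mem_range.1 (hsub.subset ha); omega

theorem monotone_fDef : Monotone (fDef F) :=
  monotone_nat_of_le_succ fDef_le_fDef_succ

theorem le_fDef_of_le_apply_ofFn {x : ℕ → ℕ} (hx : StrictMono x) (hx0 : 0 < x 0) {n : ℕ}
    (h : x (n + 1) ≤ F (List.ofFn fun i : Fin (n + 1) => x i)) : x (n + 1) ≤ fDef F (x n) := by
  refine h.trans (apply_le_fDef (List.pairwise_ofFn.2 fun i j hij => hx hij)
    (hx0.trans_le (hx.monotone n.zero_le)) fun a ha => ?_)
  obtain ⟨i, rfl⟩ := List.mem_ofFn.1 ha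
  exact hx.monotone (Nat.lt_succ_iff.1 i.isLt)

end fDef

theorem stmt18_general (F : Strat) :
    Monotone (fDef F) ∧
    ∀ x : ℕ → ℕ, StrictMono x → 0 < x 0 → ∀ N : ℕ,
      (∀ n, N ≤ n → x (n + 1) ≤ F (List.ofFn fun i : Fin (n + 1) => x i)) →
      ∀ k, 1 ≤ k → x (N + k) ≤ (fDef F)^[k] (x N) :=
  ⟨monotone_fDef, fun _ hx hx0 _ hstep k _ =>
    monotone_fDef.le_iterate_of_le_succ
      (fun n hn => le_fDef_of_le_apply_ofFn hx hx0 (hstep n hn)) k⟩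

/-- The key estimate: if `F` maps each strictly increasing sequence above its maximum,
then `fDef F` is monotone, and whenever `x (n+1) ≤ F (x 0, …, x n)` for all `n ≥ N`,
we get `x (N + k) ≤ (fDef F)^[k] (x N)` for all `k ≥ 1`. (Here, matching the paper's
convention `ℕ = {1, 2, …}`, the enumerated set consists of positive integers.) -/
theorem stmt18 (F : Strat) (hF : ∀ l : List ℕ, l.Pairwise (· < ·) → ∀ x ∈ l, x < F l) :
    Monotone (fDef F) ∧
    ∀ x : ℕ → ℕ, StrictMono x → 0 < x 0 → ∀ N : ℕ,
      (∀ n, N ≤ n → x (n + 1) ≤ F (List.ofFn fun i : Fin (n + 1) => x i)) →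
      ∀ k, 1 ≤ k → x (N + k) ≤ (fDef F)^[k] (x N) :=
  stmt18_general F
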